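/- There exist 4×4 Markov matrices M and N, both with K3 form and both embeddable (i.e. M = exp(Q₁) and N = exp(Q₂) for some rate matrices Q₁, Q₂), such that the product M·N is not embeddable: there is no rate matrix Q with exp(Q) = M·N. In particular, the set of embeddable matrices within the Kimura 3ST model is not multiplicatively closed. -/

import Mathlib

/-- The Kimura 3ST matrix `K(a,b,c,d)`. -/
def K {α : Type*} (a b c d : α) : Matrix (Fin 4) (Fin 4) α :=
  !![a, b, c, d;
     b, a, d, c;
     c, d, a, b;
     d, c, b, a]

/-- A Markov matrix: nonnegative entries, rows sum to 1. -/
def IsMarkov {k : ℕ} (M : Matrix (Fin k) (Fin k) ℝ) : Prop :=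
  (∀ i j, 0 ≤ M i j) ∧ ∀ i, ∑ j, M i j = 1

/-- A rate matrix: nonnegative off-diagonal entries, rows sum to 0. -/
def IsRate {k : ℕ} (Q : Matrix (Fin k) (Fin k) ℝ) : Prop :=
  (∀ i j, i ≠ j → 0 ≤ Q i j) ∧ ∀ i, ∑ j, Q i j = 0

/-!
The K3 matrices are simultaneously diagonalised by the four Hadamard vectors `h₀, …, h₃`, so they
form an algebra isomorphic to `ℝ⁴`. Replacing the last two factors by `ℂ`, acting on the plane
spanned by `h₂, h₃`, gives a second commutative algebra of matrices, no longer of K3 form, which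
meets the K3 matrices where the complex coordinate is real. Both parametrisations are algebra
homomorphisms, hence commute with `exp`. Thus the K3 matrix with eigenvalues
`1, e^{-2π}, -e^{-π}, -e^{-π}` is the exponential of a rate matrix with eigenvalues
`0, -2π, -π ± πi`, and the K3 matrix with eigenvalues `1, e^{-4}, e^{-2}, e^{-6}` is the
exponential of a K3 rate matrix.

Their product has the simple negative eigenvalue `-e^{-π-2}` on `h₂`. Any real logarithm `Q`
of it commutes with it, so it preserves that eigenline and acts on it by a real scalar `μ`; but then
`e^μ = -e^{-π-2}`, which is impossible.
-/

open NormedSpace Matrix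
open scoped Real

namespace Matrix

variable {n : Type*} [Fintype n]

theorem dotProduct_eq_zero_of_eigenvalue_ne {K : Type*} [Field K] {A : Matrix n n K}
    {s w : n → K} {ν μ : K} (hs : s ᵥ* A = ν • s) (hw : A *ᵥ w = μ • w) (hne : ν ≠ μ) :
    s ⬝ᵥ w = 0 := by
  have h : ν * (s ⬝ᵥ w) = μ * (s ⬝ᵥ w) := by
    rw [← smul_eq_mul, ← smul_dotProduct, ← hs, ← dotProduct_mulVec, hw, dotProduct_smul,
      smul_eq_mul]
  exact (mul_eq_mul_right_iff.mp h).resolve_left hne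

variable [DecidableEq n]

theorem pow_mulVec_of_mulVec_eq_smul {R : Type*} [CommSemiring R] {A : Matrix n n R}
    {v : n → R} {μ : R} (h : A *ᵥ v = μ • v) (k : ℕ) : (A ^ k) *ᵥ v = μ ^ k • v := by
  induction k with
  | zero => simp
  | succ k ih => rw [pow_succ, ← mulVec_mulVec, h, mulVec_smul, ih, smul_smul, pow_succ']

open scoped Matrix.Norms.Operator in
theorem exp_mulVec_of_mulVec_eq_smul {Q : Matrix n n ℝ} {v : n → ℝ} {μ : ℝ}
    (h : Q *ᵥ v = μ • v) : exp Q *ᵥ v = Real.exp μ • v := by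
  have hQ := (exp_series_hasSum_exp' (𝕂 := ℝ) Q).map (mulVec.addMonoidHomLeft v)
    (continuous_id.matrix_mulVec continuous_const)
  have hμ := (exp_series_hasSum_exp' (𝕂 := ℝ) μ).smul_const v
  rw [← Real.exp_eq_exp_ℝ] at hμ
  refine hQ.unique (hμ.congr_fun fun k => ?_)
  simp [mulVec.addMonoidHomLeft, smul_mulVec, pow_mulVec_of_mulVec_eq_smul h, smul_smul]

theorem exp_ne_of_simple_neg_eigenvalue {R : Matrix n n ℝ} {v : n → ℝ} {μ : ℝ} (hv : v ≠ 0)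
    (hRv : R *ᵥ v = μ • v) (hμ : μ < 0) (hsimple : ∀ w, R *ᵥ w = μ • w → ∃ c : ℝ, w = c • v)
    (Q : Matrix n n ℝ) : exp Q ≠ R := by
  rintro rfl
  obtain ⟨c, hc⟩ := hsimple (Q *ᵥ v) (by
    rw [mulVec_mulVec, ← (Commute.refl Q).exp_right.eq, ← mulVec_mulVec, hRv, mulVec_smul])
  have h := exp_mulVec_of_mulVec_eq_smul hc
  rw [hRv] at h
  linarith [smul_left_injective ℝ hv h, Real.exp_pos c]

end Matrix

theorem transpose_K {α : Type*} (a b c d : α) : (K a b c d)ᵀ = K a b c d := by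
  ext i j
  fin_cases i <;> fin_cases j <;> rfl

theorem isMarkov_K {a b c d : ℝ} (ha : 0 ≤ a) (hb : 0 ≤ b) (hc : 0 ≤ c) (hd : 0 ≤ d)
    (hsum : a + b + c + d = 1) : IsMarkov (K a b c d) := by
  refine ⟨fun i j => ?_, fun i => ?_⟩
  · fin_cases i <;> fin_cases j <;> assumption
  · fin_cases i <;> simp [K, Fin.sum_univ_four] <;> linarith

theorem isRate_K {a b c d : ℝ} (hb : 0 ≤ b) (hc : 0 ≤ c) (hd : 0 ≤ d)
    (hsum : a + b + c + d = 0) : IsRate (K a b c d) := by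
  refine ⟨fun i j hij => ?_, fun i => ?_⟩
  · fin_cases i <;> fin_cases j <;> first | exact absurd rfl hij | assumption
  · fin_cases i <;> simp [K, Fin.sum_univ_four] <;> linarith

def hadamard₄ : Matrix (Fin 4) (Fin 4) ℝ :=
  !![1, 1, 1, 1;
     1, 1, -1, -1;
     1, -1, 1, -1;
     1, -1, -1, 1]

theorem sum_hadamard₄_dotProduct_smul (w : Fin 4 → ℝ) :
    ∑ j, (hadamard₄ j ⬝ᵥ w / 4) • hadamard₄ j = w := by
  ext k
  fin_cases k <;> simp [hadamard₄, dotProduct, Fin.sum_univ_four] <;> ring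

noncomputable def kimuraHom : (Fin 4 → ℝ) →ₐ[ℝ] Matrix (Fin 4) (Fin 4) ℝ where
  toFun e := K ((e 0 + e 1 + e 2 + e 3) / 4) ((e 0 + e 1 - e 2 - e 3) / 4)
    ((e 0 - e 1 + e 2 - e 3) / 4) ((e 0 - e 1 - e 2 + e 3) / 4)
  map_one' := by
    ext i j
    fin_cases i <;> fin_cases j <;> norm_num [K, one_apply]
  map_mul' e f := by
    ext i j
    fin_cases i <;> fin_cases j <;> simp [K, mul_apply, Fin.sum_univ_four] <;> ring
  map_zero' := by
    ext i j
    fin_cases i <;> fin_cases j <;> simp [K]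
  map_add' e f := by
    ext i j
    fin_cases i <;> fin_cases j <;> simp [K] <;> ring
  commutes' r := by
    ext i j
    fin_cases i <;> fin_cases j <;> simp [K, algebraMap_matrix_apply] <;> ring

theorem kimuraHom_apply (e : Fin 4 → ℝ) :
    kimuraHom e = K ((e 0 + e 1 + e 2 + e 3) / 4) ((e 0 + e 1 - e 2 - e 3) / 4)
      ((e 0 - e 1 + e 2 - e 3) / 4) ((e 0 - e 1 - e 2 + e 3) / 4) :=
  rfl

theorem kimuraHom_mulVec_hadamard₄ (e : Fin 4 → ℝ) (i : Fin 4) :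
    kimuraHom e *ᵥ hadamard₄ i = e i • hadamard₄ i := by
  ext j
  fin_cases i <;> fin_cases j <;>
    simp [kimuraHom_apply, K, hadamard₄, mulVec, dotProduct, Fin.sum_univ_four] <;> ring

theorem kimuraHom_eigenvector_eq_smul {e : Fin 4 → ℝ} {i : Fin 4}
    (hsimple : ∀ j ≠ i, e j ≠ e i) {w : Fin 4 → ℝ} (hw : kimuraHom e *ᵥ w = e i • w) :
    w = (hadamard₄ i ⬝ᵥ w / 4) • hadamard₄ i := by
  have hleft (j : Fin 4) : hadamard₄ j ᵥ* kimuraHom e = e j • hadamard₄ j := by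
    rw [← kimuraHom_mulVec_hadamard₄, ← vecMul_transpose, kimuraHom_apply, transpose_K]
  conv_lhs => rw [← sum_hadamard₄_dotProduct_smul w]
  refine Finset.sum_eq_single i (fun j _ hj => ?_) (by simp)
  rw [dotProduct_eq_zero_of_eigenvalue_ne (hleft j) hw (hsimple j hj), zero_div, zero_smul]

theorem exp_ne_kimuraHom {e : Fin 4 → ℝ} {i : Fin 4} (hneg : e i < 0)
    (hsimple : ∀ j ≠ i, e j ≠ e i) (Q : Matrix (Fin 4) (Fin 4) ℝ) : exp Q ≠ kimuraHom e := by
  have hv : hadamard₄ i ≠ 0 := fun h => by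
    have := congrFun h 0
    fin_cases i <;> simp [hadamard₄] at this
  exact exp_ne_of_simple_neg_eigenvalue hv (kimuraHom_mulVec_hadamard₄ e i) hneg
    (fun w hw => ⟨_, kimuraHom_eigenvector_eq_smul hsimple hw⟩) Q

open scoped Matrix.Norms.Operator in
theorem exp_kimuraHom (e : Fin 4 → ℝ) :
    exp (kimuraHom e) = kimuraHom fun i => Real.exp (e i) := by
  have h := map_exp kimuraHom kimuraHom.toLinearMap.continuous_of_finiteDimensional e
  rw [Pi.exp_def, ← Real.exp_eq_exp_ℝ] at h
  exact h.symm

/-- Acts by `x` on `h₀`, by `y` on `h₁`, and as multiplication by `z` on the plane spanned by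
`h₂, h₃` (rows of `hadamard₄`), identified with `ℂ` via `h₂ ↦ 1`, `h₃ ↦ i`. -/
noncomputable def kimuraRotHom : (ℝ × ℝ × ℂ) →ₐ[ℝ] Matrix (Fin 4) (Fin 4) ℝ where
  toFun p :=
    let a := (p.1 + p.2.1) / 4
    let b := (p.1 - p.2.1) / 4
    let r := p.2.2.re / 2
    let s := p.2.2.im / 2
    !![a + r, a - r, b + s, b - s;
       a - r, a + r, b - s, b + s;
       b - s, b + s, a + r, a - r;
       b + s, b - s, a - r, a + r]
  map_one' := by
    ext i j
    fin_cases i <;> fin_cases j <;> norm_num [one_apply]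
  map_mul' p p' := by
    ext i j
    fin_cases i <;> fin_cases j <;>
      simp [mul_apply, Fin.sum_univ_four, Complex.mul_re, Complex.mul_im] <;> ring
  map_zero' := by
    ext i j
    fin_cases i <;> fin_cases j <;> simp
  map_add' p p' := by
    ext i j
    fin_cases i <;> fin_cases j <;> simp <;> ring
  commutes' r := by
    ext i j
    fin_cases i <;> fin_cases j <;> simp [algebraMap_matrix_apply] <;> ring

theorem kimuraRotHom_ofReal (x y r : ℝ) : kimuraRotHom (x, y, r) = kimuraHom ![x, y, r, r] := by
  ext i j
  fin_cases i <;> fin_cases j <;> simp [kimuraRotHom, kimuraHom_apply, K] <;> ring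

open scoped Matrix.Norms.Operator in
theorem exp_kimuraRotHom (x y : ℝ) (z : ℂ) :
    exp (kimuraRotHom (x, y, z)) = kimuraRotHom (Real.exp x, Real.exp y, Complex.exp z) := by
  have h := map_exp kimuraRotHom kimuraRotHom.toLinearMap.continuous_of_finiteDimensional (x, y, z)
  refine h.symm.trans (congrArg kimuraRotHom ?_)
  ext <;> simp [Real.exp_eq_exp_ℝ, Complex.exp_eq_exp_ℂ]

theorem exp_neg_pi_add_pi_mul_I :
    Complex.exp (-π + π * Complex.I) = ((-Real.exp (-π) : ℝ) : ℂ) := by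
  rw [Complex.exp_add, Complex.exp_pi_mul_I]
  push_cast
  ring

noncomputable def M₀ : Matrix (Fin 4) (Fin 4) ℝ :=
  kimuraHom ![1, Real.exp (-π) ^ 2, -Real.exp (-π), -Real.exp (-π)]

noncomputable def N₀ : Matrix (Fin 4) (Fin 4) ℝ :=
  kimuraHom ![1, Real.exp (-4), Real.exp (-2), Real.exp (-6)]

/-- `π (P - 1)` for the permutation matrix `P` of the cycle `0 → 2 → 1 → 3 → 0`. -/
noncomputable def logM₀ : Matrix (Fin 4) (Fin 4) ℝ :=
  kimuraRotHom (0, -(2 * π), -π + π * Complex.I)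

noncomputable def logN₀ : Matrix (Fin 4) (Fin 4) ℝ :=
  kimuraHom ![0, -4, -2, -6]

theorem isMarkov_M₀ : IsMarkov M₀ := by
  have hq0 : 0 < Real.exp (-π) := Real.exp_pos _
  have hq1 : Real.exp (-π) < 1 := Real.exp_lt_one_iff.mpr (by linarith [Real.pi_pos])
  rw [M₀, kimuraHom_apply]
  apply isMarkov_K <;> simp <;> nlinarith

theorem isMarkov_N₀ : IsMarkov N₀ := by
  have h2 : Real.exp (-2) < 1 := Real.exp_lt_one_iff.mpr (by norm_num)
  have h4 : Real.exp (-4) < 1 := Real.exp_lt_one_iff.mpr (by norm_num)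
  have h6 : Real.exp (-6) = Real.exp (-4) * Real.exp (-2) := by rw [← Real.exp_add]; norm_num
  have := Real.exp_pos (-2)
  have := Real.exp_pos (-4)
  rw [N₀, kimuraHom_apply]
  apply isMarkov_K <;> simp [h6] <;> nlinarith

theorem isRate_logM₀ : IsRate logM₀ := by
  refine ⟨fun i j hij => ?_, fun i => ?_⟩
  · fin_cases i <;> fin_cases j <;>
      first | exact absurd rfl hij | (simp [logM₀, kimuraRotHom]; linarith [Real.pi_pos])
  · fin_cases i <;> simp [logM₀, kimuraRotHom, Fin.sum_univ_four] <;> ring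

theorem isRate_logN₀ : IsRate logN₀ := by
  rw [logN₀, kimuraHom_apply]
  apply isRate_K <;> simp <;> norm_num

theorem exp_logM₀ : exp logM₀ = M₀ := by
  rw [logM₀, exp_kimuraRotHom, Real.exp_zero, exp_neg_pi_add_pi_mul_I, kimuraRotHom_ofReal, M₀]
  congr
  rw [← Real.exp_nat_mul]
  ring_nf

theorem exp_logN₀ : exp logN₀ = N₀ := by
  rw [logN₀, exp_kimuraHom, N₀]
  congr
  ext i
  fin_cases i <;> simp

theorem exp_ne_M₀_mul_N₀ (Q : Matrix (Fin 4) (Fin 4) ℝ) : exp Q ≠ M₀ * N₀ := by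
  have hq := Real.exp_pos (-π)
  have h6 : Real.exp (-6) < Real.exp (-2) := Real.exp_lt_exp.mpr (by norm_num)
  rw [M₀, N₀, ← map_mul]
  refine exp_ne_kimuraHom (i := 2) ?_ (fun j hj => ?_) Q
  · simp only [Pi.mul_apply, cons_val, neg_mul, Left.neg_neg_iff]
    positivity
  · fin_cases j <;> simp at hj ⊢ <;> nlinarith [Real.exp_pos (-4), Real.exp_pos (-2)]

theorem stmt_15 :
    ∃ M N : Matrix (Fin 4) (Fin 4) ℝ,
      IsMarkov M ∧ IsMarkov N ∧
      (∃ a b c d : ℝ, M = K a b c d) ∧ (∃ a b c d : ℝ, N = K a b c d) ∧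
      (∃ Q₁ : Matrix (Fin 4) (Fin 4) ℝ, IsRate Q₁ ∧ NormedSpace.exp Q₁ = M) ∧
      (∃ Q₂ : Matrix (Fin 4) (Fin 4) ℝ, IsRate Q₂ ∧ NormedSpace.exp Q₂ = N) ∧
      ¬∃ Q : Matrix (Fin 4) (Fin 4) ℝ, IsRate Q ∧ NormedSpace.exp Q = M * N :=
  ⟨M₀, N₀, isMarkov_M₀, isMarkov_N₀, ⟨_, _, _, _, rfl⟩, ⟨_, _, _, _, rfl⟩,
    ⟨logM₀, isRate_logM₀, exp_logM₀⟩, ⟨logN₀, isRate_logN₀, exp_logN₀⟩,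
    fun ⟨Q, _, hQ⟩ => exp_ne_M₀_mul_N₀ Q hQ⟩
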